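/- arXiv:1211.0304 — 4 statements merged into one kernel-verified Lean document; each statement's English description precedes it below -/
import Mathlib

section
/- Let G' be a finite group, N a subgroup of G' contained in the center of G', k a field, and χ : N → kˣ an injective group homomorphism. Let k_χ denote the one-dimensional representation of N on k in which n ∈ N acts by multiplication by χ(n), and let W = k[G'] ⊗_{k[N]} k_χ be the representation of G' induced from k_χ. Then W is a faithful representation of G': the associated group homomorphism G' → GL_k(W) is injective, i.e., for every g' ∈ G' with g' ≠ 1 there exists x ∈ W with g'·x ≠ x. -/
/-- Let `G'` be a finite group, `N` a subgroup of `G'` contained in the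
center, `k` a field, and `χ : N → kˣ` an injective homomorphism.  The induced representation
`W = k[G'] ⊗_{k[N]} k_χ` is realized as the quotient of the group algebra `k[G']` by the
`k`-submodule spanned by the elements `single (g·n) 1 − χ(n)·single g 1`; the group `G'` acts
on it by left multiplication.  Then this representation is faithful: for every `g' ≠ 1` there
is an `x` whose class in `W` is moved by `g'`, i.e. `g'·x − x` does not lie in the spanned
submodule. -/
theorem stmt1 (k : Type*) [Field k] (G' : Type*) [Group G'] [Finite G']
    (N : Subgroup G') (hN : N ≤ Subgroup.center G')
    (χ : N →* kˣ) (hχ : Function.Injective χ) :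
    ∀ g' : G', g' ≠ 1 →
      ∃ x : MonoidAlgebra k G',
        MonoidAlgebra.single (g' : G') (1 : k) * x - x ∉
          Submodule.span k {v : MonoidAlgebra k G' |
            ∃ (g : G') (n : N), v = MonoidAlgebra.single (g * (n : G')) (1 : k)
              - (χ n : k) • MonoidAlgebra.single g (1 : k)} := by
  classical
  intro g' hg'
  refine ⟨MonoidAlgebra.single 1 1, ?_⟩
  -- coset representatives, normalized so that the trivial coset has representative 1
  set q : G' → G' ⧸ N := QuotientGroup.mk with hq
  set e : G' ⧸ N := q 1 with he
  let r : G' ⧸ N → G' := fun w => if w = e then 1 else w.out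
  have hr : ∀ g : G', q (r (q g)) = q g := by
    intro g
    by_cases h : q g = e
    · simp [r, h]; exact he.symm
    · simp only [r, if_neg h]
      exact QuotientGroup.out_eq' _
  have hmem : ∀ g : G', (r (q g))⁻¹ * g ∈ N := fun g => QuotientGroup.eq.mp (hr g)
  let nn : G' → N := fun g => ⟨(r (q g))⁻¹ * g, hmem g⟩
  have hnn : ∀ (g : G') (n : N), nn (g * (n : G')) = nn g * n := by
    intro g n
    have hq' : q (g * (n : G')) = q g := QuotientGroup.mk_mul_of_mem g n.2
    apply Subtype.ext
    simp only [nn, hq', Subgroup.coe_mul, mul_assoc]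
  let c : G' → k := fun g => (χ (nn g) : k)
  -- the key linear functionals
  let lam : (G' ⧸ N) → MonoidAlgebra k G' →ₗ[k] k := fun w =>
    (Finsupp.linearCombination k (fun g : G' => if q g = w then c g else 0)).comp
      (MonoidAlgebra.coeffLinearEquiv k).toLinearMap
  have hlam_single : ∀ (w : G' ⧸ N) (g : G'),
      lam w (MonoidAlgebra.single g (1 : k)) = if q g = w then c g else 0 := by
    intro w g
    show Finsupp.linearCombination k _ (Finsupp.single g (1 : k)) = _
    rw [Finsupp.linearCombination_single, one_smul]
  have hker : ∀ w : G' ⧸ N,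
      Submodule.span k {v : MonoidAlgebra k G' |
        ∃ (g : G') (n : N), v = MonoidAlgebra.single (g * (n : G')) (1 : k)
          - (χ n : k) • MonoidAlgebra.single g (1 : k)} ≤ LinearMap.ker (lam w) := by
    intro w
    rw [Submodule.span_le]
    rintro v ⟨g, n, rfl⟩
    have hq' : q (g * (n : G')) = q g := QuotientGroup.mk_mul_of_mem g n.2
    have hc : c (g * (n : G')) = (χ n : k) * c g := by
      simp only [c, hnn, map_mul, Units.val_mul]
      ring
    simp only [SetLike.mem_coe, LinearMap.mem_ker, map_sub, map_smul, hlam_single, hq',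
      smul_eq_mul]
    by_cases h : q g = w
    · simp [h, hc, mul_comm]
    · simp [h]
  intro hspan
  have hx : MonoidAlgebra.single (g' : G') (1 : k) * MonoidAlgebra.single (1 : G') (1 : k)
      = MonoidAlgebra.single g' 1 := by
    rw [MonoidAlgebra.single_mul_single, mul_one, mul_one]
  rw [hx] at hspan
  have hre : r e = 1 := if_pos rfl
  by_cases hg'N : g' ∈ N
  · -- use the trivial coset functional
    have hg'1 : q g' = e := QuotientGroup.eq.mpr (by simpa using N.inv_mem hg'N)
    have hz := hker e hspan
    rw [LinearMap.mem_ker, map_sub, hlam_single, hlam_single, he, hg'1, if_pos rfl,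
      if_pos rfl, sub_eq_zero] at hz
    have hc1 : c (1 : G') = 1 := by
      have h1 : nn (1 : G') = 1 := by
        apply Subtype.ext
        simp [nn, ← he, hre]
      simp [c, h1]
    have hcg' : c g' = (χ ⟨g', hg'N⟩ : k) := by
      have h1 : nn g' = ⟨g', hg'N⟩ := by
        apply Subtype.ext
        simp [nn, hg'1, hre]
      simp [c, h1]
    rw [hcg', hc1] at hz
    have h2 : χ ⟨g', hg'N⟩ = 1 := Units.ext (by simpa using hz)
    have h3 := hχ (h2.trans (map_one χ).symm)
    exact hg' (by simpa using congrArg Subtype.val h3)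
  · -- use the coset of g'
    have hg'1 : q g' ≠ e := fun h => hg'N (by simpa using N.inv_mem (QuotientGroup.eq.mp h))
    have hz := hker (q g') hspan
    rw [LinearMap.mem_ker, map_sub, hlam_single, hlam_single, if_pos rfl, ← he,
      if_neg (fun h => hg'1 h.symm), sub_zero] at hz
    exact (χ (nn g')).ne_zero hz
end

section
/- Let m be a positive integer, k a field in which m is invertible and which contains a primitive m-th root of unity, k_s a separable closure of k, and G a finite group of exponent dividing m. Regard kˣ, k_sˣ and the quotient group k_sˣ/kˣ as G-modules with trivial G-action. Then in the long exact group-cohomology sequence associated to the short exact sequence 1 → kˣ → k_sˣ → k_sˣ/kˣ → 1, the connecting homomorphism δ : H¹(G, k_sˣ/kˣ) → H²(G, kˣ) is injective, and its image equals the kernel of the map H²(G, kˣ) → H²(G, k_sˣ) induced by the inclusion kˣ ⊆ k_sˣ; that is, the sequence 0 → H¹(G, k_sˣ/kˣ) → H²(G, kˣ) → H²(G, k_sˣ) is exact. -/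
/-- With `k ⊆ K` a separable closure, `m` invertible in `k`, `ζ` a primitive
`m`-th root of unity in `k`, and `G` a finite group of exponent dividing `m`, regard `kˣ`,
`Kˣ`, `Kˣ/kˣ` as trivial `G`-modules.  The sequence
`0 → H¹(G, Kˣ/kˣ) → H²(G, kˣ) → H²(G, Kˣ)` is exact.  Since the actions are trivial,
`H¹(G, Kˣ/kˣ) = Hom(G, Kˣ/kˣ)`, and the statement is expressed on cocycles: (1) the connecting
homomorphism `δ` is injective: if `φ : G →* Kˣ/kˣ` has a set-theoretic lift `s : G → Kˣ`
whose coboundary `c(g,h) = s(g)s(h)s(gh)⁻¹` (which takes values in `kˣ`) is a `kˣ`-valued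
coboundary, then `φ = 1`; (2) the image of `δ` equals the kernel of
`H²(G, kˣ) → H²(G, Kˣ)`: a `kˣ`-valued 2-cocycle `z` becomes a coboundary over `Kˣ` iff after
modification by a `kˣ`-valued coboundary it is the coboundary of a lift `s : G → Kˣ` of a
homomorphism `G →* Kˣ/kˣ`. -/
theorem stmt3 (m : ℕ) (hm : 0 < m) (k K : Type*) [Field k] [Field K] [Algebra k K]
    [IsSepClosure k K] (hmk : (m : k) ≠ 0) (ζ : k) (hζ : IsPrimitiveRoot ζ m)
    (G : Type*) [Group G] [Finite G] (hG : ∀ g : G, g ^ m = 1) :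
    -- (1) injectivity of the connecting homomorphism δ : H¹(G, Kˣ/kˣ) → H²(G, kˣ)
    (∀ (φ : G →* Kˣ ⧸ (Units.map (algebraMap k K).toMonoidHom).range)
        (s : G → Kˣ),
        (∀ g : G, (QuotientGroup.mk (s g) :
            Kˣ ⧸ (Units.map (algebraMap k K).toMonoidHom).range) = φ g) →
        ∀ c : G → G → kˣ,
          (∀ g h : G, Units.map (algebraMap k K).toMonoidHom (c g h)
              = s g * s h * (s (g * h))⁻¹) →
          (∃ t : G → kˣ, ∀ g h : G, c g h = t g * t h * (t (g * h))⁻¹) →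
          φ = 1) ∧
    -- (2) exactness at H²(G, kˣ): image of δ = kernel of H²(G, kˣ) → H²(G, Kˣ)
    (∀ z : G → G → kˣ,
        (∀ g h l : G, z g h * z (g * h) l = z h l * z g (h * l)) →
        ((∃ t : G → Kˣ, ∀ g h : G,
            Units.map (algebraMap k K).toMonoidHom (z g h) = t g * t h * (t (g * h))⁻¹)
          ↔
        (∃ (s : G → Kˣ) (t : G → kˣ), ∀ g h : G,
            Units.map (algebraMap k K).toMonoidHom (z g h * (t g * t h * (t (g * h))⁻¹)⁻¹)
              = s g * s h * (s (g * h))⁻¹))) := by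
  haveI : NeZero m := ⟨hm.ne'⟩
  set A := Units.map (algebraMap k K).toMonoidHom with hA
  have hζ' : IsPrimitiveRoot (algebraMap k K ζ) m :=
    hζ.map_of_injective (algebraMap k K).injective
  constructor
  · rintro φ s hs c hc ⟨t, ht⟩
    set f : G → Kˣ := fun g => s g * (A (t g))⁻¹ with hf
    have hmul : ∀ g h : G, f g * f h = f (g * h) := by
      intro g h
      have h1 : (A (t g) * A (t h) * (A (t (g * h)))⁻¹ : Kˣ)
          = s g * s h * (s (g * h))⁻¹ := by
        rw [← map_inv, ← map_mul, ← map_mul, ← ht g h]; exact hc g h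
      simp only [hf]
      rw [mul_mul_mul_comm, ← mul_inv]
      rw [mul_inv_eq_iff_eq_mul] at h1
      rw [h1]
      apply Units.ext
      simp only [Units.val_mul, Units.val_inv_eq_inv_val]
      field_simp
    have hone : f 1 = 1 := by
      have h1 := hmul 1 1
      rw [mul_one] at h1
      exact mul_eq_left.mp h1
    have hpow : ∀ (n : ℕ) (g : G), f g ^ n = f (g ^ n) := by
      intro n g
      induction n with
      | zero => simp [hone]
      | succ n ih => rw [pow_succ, pow_succ, ih, hmul]
    have hfm : ∀ g : G, f g ^ m = 1 := fun g => by rw [hpow, hG g, hone]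
    have key : ∀ g : G, ∃ u : kˣ, A u = f g := by
      intro g
      have hx : ((f g : Kˣ) : K) ^ m = 1 := by
        have := congrArg (Units.val) (hfm g)
        simpa using this
      obtain ⟨i, _, hiq⟩ := hζ'.eq_pow_of_pow_eq_one hx
      have huζ : IsUnit ζ := hζ.isUnit hm.ne'
      refine ⟨huζ.unit ^ i, ?_⟩
      apply Units.ext
      have : ((A (huζ.unit ^ i) : Kˣ) : K) = algebraMap k K (ζ ^ i) := by
        simp [hA]
      rw [this, map_pow, hiq]
    have hmem : ∀ g : G, s g ∈ A.range := by
      intro g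
      obtain ⟨u, hu⟩ := key g
      refine ⟨u * t g, ?_⟩
      rw [map_mul, hu]
      simp [hf]
    ext g
    rw [← hs g]
    simpa [QuotientGroup.eq_one_iff] using hmem g
  · intro z hz
    constructor
    · rintro ⟨t, ht⟩
      refine ⟨t, fun _ => 1, fun g h => ?_⟩
      simpa using ht g h
    · rintro ⟨s, t, hst⟩
      refine ⟨fun g => s g * A (t g), fun g h => ?_⟩
      have h1 := hst g h
      rw [map_mul, map_inv, map_mul, map_mul, map_inv, mul_inv_eq_iff_eq_mul] at h1
      apply Units.ext
      have h1' := congrArg (Units.val) h1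
      simp only [Units.val_mul, Units.val_inv_eq_inv_val] at h1' ⊢
      field_simp at h1' ⊢
      linear_combination h1'
end

section
/- Let G be a group acting by homeomorphisms on a Noetherian topological space X, and let U ⊆ X be a G-stable open subset. Then there exists a finite chain U = V₀ ⊆ V₁ ⊆ … ⊆ V_n = X of G-stable open subsets of X such that for each i the complement V_{i+1} \ V_i, with its subspace topology and induced G-action, is closed in V_{i+1} and G-irreducible. -/
open Pointwise
open TopologicalSpace


section Aux

variable {G X : Type*} [Group G] [TopologicalSpace X] [MulAction G X]
  [ContinuousConstSMul G X]

/-- Closedness in a subspace gives `S ∩ closure F ⊆ F`. -/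
lemma aux_closed_sub {S F : Set X} (hFS : F ⊆ S)
    (h : IsClosed ((Subtype.val : ↥S → X) ⁻¹' F)) :
    S ∩ closure F ⊆ F := by
  obtain ⟨t, ht, hpre⟩ := isClosed_induced_iff.mp h
  have hFt : F ⊆ t := by
    intro y hy
    have : (⟨y, hFS hy⟩ : ↥S) ∈ (Subtype.val : ↥S → X) ⁻¹' F := hy
    rw [← hpre] at this
    exact this
  rintro x ⟨hxS, hxcl⟩
  have hxt : x ∈ t := ht.closure_subset_iff.mpr hFt hxcl
  have : (⟨x, hxS⟩ : ↥S) ∈ (Subtype.val : ↥S → X) ⁻¹' t := hxt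
  rw [hpre] at this
  exact this

lemma aux_smul_closure (g : G) {F : Set X} (hF : g • F = F) :
    g • closure F = closure F := by
  rw [← closure_smul, hF]

/-- `G`-stable closure of the orbit of a set. -/
def orbCl (G : Type*) {X : Type*} [Group G] [MulAction G X] [TopologicalSpace X]
    (C : Set X) : Set X :=
  closure (⋃ g : G, g • C)

lemma orbCl_closed (C : Set X) : IsClosed (orbCl G C) := isClosed_closure

lemma orbCl_stable (g : G) (C : Set X) : g • orbCl G C = orbCl G C := by
  apply aux_smul_closure
  rw [Set.smul_set_iUnion]
  ext x
  simp only [Set.mem_iUnion]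
  constructor
  · rintro ⟨g', hx⟩
    exact ⟨g * g', by rwa [mul_smul]⟩
  · rintro ⟨g', hx⟩
    refine ⟨g⁻¹ * g', ?_⟩
    rwa [smul_smul, mul_inv_cancel_left]

lemma subset_orbCl (C : Set X) : C ⊆ orbCl G C := by
  refine le_trans ?_ subset_closure
  intro x hx
  exact Set.mem_iUnion.mpr ⟨1, by simpa using hx⟩

lemma orbCl_subset {C Z : Set X} (hZc : IsClosed Z) (hZst : ∀ g : G, g • Z = Z)
    (hCZ : C ⊆ Z) : orbCl G C ⊆ Z := by
  apply hZc.closure_subset_iff.mpr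
  refine Set.iUnion_subset fun g => ?_
  rw [← hZst g]
  exact Set.smul_set_mono hCZ

lemma orbCl_irred {C : Set X} (hC : IsIrreducible C) {A B : Set X}
    (hA : IsClosed A) (hB : IsClosed B) (hAst : ∀ g : G, g • A = A)
    (hBst : ∀ g : G, g • B = B) (hsub : orbCl G C ⊆ A ∪ B) :
    orbCl G C ⊆ A ∨ orbCl G C ⊆ B := by
  have hCsub : C ⊆ A ∪ B := (subset_orbCl C).trans hsub
  rcases (isPreirreducible_iff_isClosed_union_isClosed.mp hC.2) A B hA hB hCsub with h | h
  · exact Or.inl (orbCl_subset hA hAst h)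
  · exact Or.inr (orbCl_subset hB hBst h)

/-- `orbCl` on closed sets. -/
abbrev orbClC (G : Type*) {X : Type*} [Group G] [MulAction G X] [TopologicalSpace X]
    (C : Closeds X) : Set X := orbCl G (C : Set X)

end Aux

section Main

variable {G X : Type*} [Group G] [TopologicalSpace X]
  [TopologicalSpace.NoetherianSpace X] [MulAction G X] [ContinuousConstSMul G X]

lemma stmt6_aux :
    ∀ Z : Closeds X, ∀ U : Set X, IsOpen U → (∀ g : G, g • U = U) → (Z : Set X) = Uᶜ →
    ∃ (n : ℕ) (V : Fin (n + 1) → Set X),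
      V 0 = U ∧ V (Fin.last n) = Set.univ ∧
      (∀ i, IsOpen (V i) ∧ ∀ g : G, g • V i = V i) ∧
      (∀ i : Fin n, V i.castSucc ⊆ V i.succ) ∧
      (∀ i : Fin n,
        IsClosed ((Subtype.val : ↥(V i.succ) → X) ⁻¹'
            (V i.succ \ V i.castSucc)) ∧
        (∀ F₁ F₂ : Set X,
          F₁ ⊆ V i.succ \ V i.castSucc → F₂ ⊆ V i.succ \ V i.castSucc →
          IsClosed ((Subtype.val : ↥(V i.succ \ V i.castSucc) → X) ⁻¹' F₁) →
          IsClosed ((Subtype.val : ↥(V i.succ \ V i.castSucc) → X) ⁻¹' F₂) →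
          (∀ g : G, g • F₁ = F₁) → (∀ g : G, g • F₂ = F₂) →
          V i.succ \ V i.castSucc = F₁ ∪ F₂ →
          V i.succ \ V i.castSucc = F₁ ∨ V i.succ \ V i.castSucc = F₂)) := by
  intro Z
  induction Z using (wellFounded_lt (α := Closeds X)).induction with
  | _ Z IH =>
  intro U hUopen hUst hZU
  classical
  by_cases hU : U = Set.univ
  · subst hU
    exact ⟨0, fun _ => Set.univ, rfl, rfl,
      fun _ => ⟨isOpen_univ, fun _ => Set.smul_set_univ⟩,
      fun i => i.elim0, fun i => i.elim0⟩
  · -- Z = Uᶜ is nonempty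
    have hZcl : IsClosed (Z : Set X) := Z.isClosed
    have hZst : ∀ g : G, g • (Z : Set X) = (Z : Set X) := by
      intro g; rw [hZU, Set.smul_set_compl, hUst]
    obtain ⟨S, hSirr, hSsup⟩ := NoetherianSpace.exists_finset_irreducible Z
    have hCsubZ : ∀ C ∈ S, (C : Set X) ⊆ (Z : Set X) := by
      intro C hC
      have : C ≤ S.sup id := Finset.le_sup (f := id) hC
      rw [← hSsup] at this
      exact this
    have horbsub : ∀ C ∈ S, orbClC G C ⊆ (Z : Set X) :=
      fun C hC => orbCl_subset hZcl hZst (hCsubZ C hC)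
    have hZcov : (Z : Set X) ⊆ ⋃ C ∈ S, orbClC G C := by
      conv_lhs => rw [hSsup]
      intro x hx
      rw [Closeds.coe_finset_sup] at hx
      simp only [Finset.sup_set_eq_biUnion, Set.mem_iUnion, id] at hx ⊢
      obtain ⟨C, hC, hxC⟩ := hx
      exact ⟨C, hC, subset_orbCl _ hxC⟩
    -- minimal covering subfamily
    set 𝒯 := (S.powerset.filter fun T => (Z : Set X) ⊆ ⋃ C ∈ T, orbClC G C)
      with h𝒯
    have hS𝒯 : S ∈ 𝒯 := by
      simp only [h𝒯, Finset.mem_filter, Finset.mem_powerset]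
      exact ⟨le_refl S, hZcov⟩
    obtain ⟨T, hT𝒯, hTmin⟩ := 𝒯.exists_min_image Finset.card ⟨S, hS𝒯⟩
    simp only [h𝒯, Finset.mem_filter, Finset.mem_powerset] at hT𝒯
    obtain ⟨hTS, hTcov⟩ := hT𝒯
    have hZne : (Z : Set X).Nonempty := by
      rw [hZU]; exact Set.nonempty_compl.mpr hU
    have hTne : T.Nonempty := by
      obtain ⟨x, hx⟩ := hZne
      have := hTcov hx
      simp only [Set.mem_iUnion] at this
      obtain ⟨C, hC, -⟩ := this
      exact ⟨C, hC⟩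
    obtain ⟨j, hj⟩ := hTne
    set Z' : Set X := ⋃ C ∈ T.erase j, orbClC G C with hZ'def
    have hZ'cl : IsClosed Z' :=
      Set.Finite.isClosed_biUnion (T.erase j).finite_toSet fun C _ => orbCl_closed _
    have hZ'st : ∀ g : G, g • Z' = Z' := by
      intro g
      rw [hZ'def, Set.smul_set_iUnion₂]
      exact Set.iUnion₂_congr fun C _ => orbCl_stable g _
    have hZ'Z : Z' ⊆ (Z : Set X) := by
      refine Set.iUnion₂_subset fun C hC => horbsub C (hTS (Finset.mem_of_mem_erase hC))
    have hZ'ne : Z' ≠ (Z : Set X) := by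
      intro h
      have hmem : T.erase j ∈ 𝒯 := by
        simp only [h𝒯, Finset.mem_filter, Finset.mem_powerset]
        exact ⟨(Finset.erase_subset j T).trans hTS, by rw [← hZ'def, h]⟩
      have := hTmin _ hmem
      exact absurd this (not_le.mpr (Finset.card_erase_lt_of_mem hj))
    have hcov2 : (Z : Set X) ⊆ Z' ∪ orbClC G j := by
      intro x hx
      have := hTcov hx
      simp only [Set.mem_iUnion] at this
      obtain ⟨C, hC, hxC⟩ := this
      by_cases hCj : C = j
      · exact Or.inr (hCj ▸ hxC)
      · exact Or.inl (Set.mem_biUnion (Finset.mem_erase.mpr ⟨hCj, hC⟩) hxC)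
    set U' : Set X := Z'ᶜ with hU'def
    have hU'open : IsOpen U' := hZ'cl.isOpen_compl
    have hU'st : ∀ g : G, g • U' = U' := by
      intro g; rw [hU'def, Set.smul_set_compl, hZ'st]
    have hUU' : U ⊆ U' := by
      rw [hU'def, ← compl_compl U, ← hZU]
      exact Set.compl_subset_compl.mpr hZ'Z
    have hlt : (⟨Z', hZ'cl⟩ : Closeds X) < Z := by
      rw [← SetLike.coe_ssubset_coe]
      exact ssubset_of_subset_of_ne hZ'Z hZ'ne
    obtain ⟨n, V, hV0, hVlast, hVprop, hVmono, hVsteps⟩ :=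
      IH ⟨Z', hZ'cl⟩ hlt U' hU'open hU'st (by simp [hU'def])
    -- the key facts about the new step U ⊆ U'
    have hdiff : U' \ U = (Z : Set X) \ Z' := by
      rw [hU'def, hZU]
      ext x
      simp only [Set.mem_diff, Set.mem_compl_iff]
      tauto
    have hS₀Fj : U' \ U ⊆ orbClC G j := by
      rw [hdiff]
      rintro x ⟨hxZ, hxZ'⟩
      rcases hcov2 hxZ with h | h
      · exact absurd h hxZ'
      · exact h
    have hstep0closed : IsClosed ((Subtype.val : ↥U' → X) ⁻¹' (U' \ U)) := by
      have : ((Subtype.val : ↥U' → X) ⁻¹' (U' \ U)) =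
          ((Subtype.val : ↥U' → X) ⁻¹' Uᶜ) := by
        ext x
        simp only [Set.mem_preimage, Set.mem_diff, Set.mem_compl_iff]
        exact and_iff_right x.2
      rw [this]
      exact hUopen.isClosed_compl.preimage continuous_subtype_val
    have hstep0irr : ∀ F₁ F₂ : Set X,
        F₁ ⊆ U' \ U → F₂ ⊆ U' \ U →
        IsClosed ((Subtype.val : ↥(U' \ U) → X) ⁻¹' F₁) →
        IsClosed ((Subtype.val : ↥(U' \ U) → X) ⁻¹' F₂) →
        (∀ g : G, g • F₁ = F₁) → (∀ g : G, g • F₂ = F₂) →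
        U' \ U = F₁ ∪ F₂ → U' \ U = F₁ ∨ U' \ U = F₂ := by
      intro F₁ F₂ h1s h2s h1c h2c h1st h2st heq
      have hj' : IsIrreducible ((j : Closeds X) : Set X) := hSirr ⟨j, hTS hj⟩
      have hcl1st : ∀ g : G, g • closure F₁ = closure F₁ :=
        fun g => aux_smul_closure g (h1st g)
      have hcl2st : ∀ g : G, g • closure F₂ = closure F₂ :=
        fun g => aux_smul_closure g (h2st g)
      have hFjsub : orbClC G j ⊆ (closure F₁ ∪ closure F₂) ∪ Z' := by
        intro x hx
        by_cases hxZ' : x ∈ Z'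
        · exact Or.inr hxZ'
        · have hxZ : x ∈ (Z : Set X) := horbsub j (hTS hj) hx
          have hxS₀ : x ∈ U' \ U := by
            rw [hdiff]; exact ⟨hxZ, hxZ'⟩
          rw [heq] at hxS₀
          rcases hxS₀ with h | h
          · exact Or.inl (Or.inl (subset_closure h))
          · exact Or.inl (Or.inr (subset_closure h))
      have hstep1 := orbCl_irred hj' (isClosed_closure.union isClosed_closure) hZ'cl
        (fun g => by rw [Set.smul_set_union, hcl1st, hcl2st]) hZ'st hFjsub
      rcases hstep1 with h | h
      · rcases orbCl_irred hj' isClosed_closure isClosed_closure hcl1st hcl2st h with h' | h'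
        · left
          have hsub1 : U' \ U ⊆ F₁ := fun x hx =>
            aux_closed_sub h1s h1c ⟨hx, h' (hS₀Fj hx)⟩
          exact Set.Subset.antisymm hsub1 h1s
        · right
          have hsub2 : U' \ U ⊆ F₂ := fun x hx =>
            aux_closed_sub h2s h2c ⟨hx, h' (hS₀Fj hx)⟩
          exact Set.Subset.antisymm hsub2 h2s
      · exfalso
        apply hZ'ne
        refine Set.Subset.antisymm hZ'Z fun x hx => ?_
        rcases hcov2 hx with h' | h'
        · exact h'
        · exact h h'
    refine ⟨n + 1, Fin.cons U V, Fin.cons_zero _ _, ?_, ?_, ?_, ?_⟩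
    · rw [← Fin.succ_last, Fin.cons_succ]
      exact hVlast
    · intro i
      refine Fin.cases ?_ ?_ i
      · simpa using ⟨hUopen, hUst⟩
      · intro k
        simpa [Fin.cons_succ] using hVprop k
    · intro i
      refine Fin.cases ?_ ?_ i
      · simpa [Fin.cons_succ, hV0] using hUU'
      · intro k
        rw [← Fin.succ_castSucc, Fin.cons_succ, Fin.cons_succ]
        exact hVmono k
    · intro i
      refine Fin.cases ?_ ?_ i
      · rw [Fin.castSucc_zero, Fin.cons_zero, Fin.cons_succ, hV0]
        exact ⟨hstep0closed, hstep0irr⟩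
      · intro k
        rw [← Fin.succ_castSucc, Fin.cons_succ, Fin.cons_succ]
        exact hVsteps k

end Main

/-- If a group `G` acts by homeomorphisms on a Noetherian topological space
`X` and `U ⊆ X` is a `G`-stable open subset, then there is a finite chain
`U = V₀ ⊆ V₁ ⊆ … ⊆ Vₙ = X` of `G`-stable open subsets such that each difference
`V_{i+1} \ V_i` (with the subspace topology and the induced `G`-action) is closed in
`V_{i+1}` and `G`-irreducible. -/
theorem stmt6 (G X : Type*) [Group G] [TopologicalSpace X]
    [TopologicalSpace.NoetherianSpace X] [MulAction G X]
    (hcont : ∀ g : G, Continuous fun x : X => g • x)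
    (U : Set X) (hUopen : IsOpen U) (hUstable : ∀ g : G, g • U = U) :
    ∃ (n : ℕ) (V : Fin (n + 1) → Set X),
      V 0 = U ∧ V (Fin.last n) = Set.univ ∧
      (∀ i, IsOpen (V i) ∧ ∀ g : G, g • V i = V i) ∧
      (∀ i : Fin n, V i.castSucc ⊆ V i.succ) ∧
      (∀ i : Fin n,
        -- `V_{i+1} \ V_i` is closed in the subspace `V_{i+1}`
        IsClosed ((Subtype.val : ↥(V i.succ) → X) ⁻¹'
            (V i.succ \ V i.castSucc)) ∧
        -- `V_{i+1} \ V_i` is `G`-irreducible (for its subspace topology and induced action)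
        (∀ F₁ F₂ : Set X,
          F₁ ⊆ V i.succ \ V i.castSucc → F₂ ⊆ V i.succ \ V i.castSucc →
          IsClosed ((Subtype.val : ↥(V i.succ \ V i.castSucc) → X) ⁻¹' F₁) →
          IsClosed ((Subtype.val : ↥(V i.succ \ V i.castSucc) → X) ⁻¹' F₂) →
          (∀ g : G, g • F₁ = F₁) → (∀ g : G, g • F₂ = F₂) →
          V i.succ \ V i.castSucc = F₁ ∪ F₂ →
          V i.succ \ V i.castSucc = F₁ ∨ V i.succ \ V i.castSucc = F₂)) := by
  haveI : ContinuousConstSMul G X := ⟨hcont⟩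
  exact stmt6_aux ⟨Uᶜ, hUopen.isClosed_compl⟩ U hUopen hUstable rfl
end

section
/- Let F be a field, n a natural number, and K an intermediate field F ⊆ K ⊆ F(X₁, …, X_n) of the field of rational functions in n variables over F. Then the base-change homomorphism of Brauer groups Br(F) → Br(K) is injective. -/
open TensorProduct

set_option synthInstance.maxHeartbeats 1000000
set_option maxHeartbeats 2000000

section Density

variable {A S : Type*} [Ring A] [AddCommGroup S] [Module A S]

private lemma stmt10_pi_semisimple [IsSimpleModule A S] (k : ℕ) :
    IsSemisimpleModule A (Fin k → S) := by
  classical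
  apply IsSemisimpleModule.of_sSup_simples_eq_top
  rw [eq_top_iff]
  intro x _
  have hx : x = ∑ i : Fin k, Pi.single i (x i) := (Finset.univ_sum_single x).symm
  rw [hx]
  refine Submodule.sum_mem _ fun i _ => ?_
  have hinj : Function.Injective (LinearMap.single A (fun _ : Fin k => S) i) := by
    intro a b hab
    simpa using congrArg (fun t : Fin k → S => t i) hab
  have hV : IsSimpleModule A
      ↥(LinearMap.range (LinearMap.single A (fun _ : Fin k => S) i)) :=
    IsSimpleModule.congr
      (LinearEquiv.ofInjective (LinearMap.single A (fun _ : Fin k => S) i) hinj).symm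
  exact Submodule.mem_sSup_of_mem
    (show _ ∈ {m : Submodule A (Fin k → S) | IsSimpleModule A ↥m} from hV) ⟨x i, rfl⟩

private lemma stmt10_density [IsSimpleModule A S] (f : S → S)
    (hadd : ∀ x y, f (x + y) = f x + f y)
    (hcomm : ∀ (d : Module.End A S) (s : S), f (d s) = d (f s))
    {k : ℕ} (m : Fin k → S) :
    ∃ a : A, ∀ i, f (m i) = a • m i := by
  classical
  haveI := stmt10_pi_semisimple (A := A) (S := S) k
  obtain ⟨N', hN'⟩ := exists_isCompl (Submodule.span A {m})
  let N : Submodule A (Fin k → S) := Submodule.span A {m}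
  let π : (Fin k → S) →ₗ[A] (Fin k → S) := N.subtype ∘ₗ (N.linearProjOfIsCompl N' hN')
  let Ff : (Fin k → S) → (Fin k → S) := fun t i => f (t i)
  have expand : ∀ (g : (Fin k → S) →ₗ[A] (Fin k → S)) (u : Fin k → S),
      g u = ∑ j, g (Pi.single j (u j)) := by
    intro g u
    conv_lhs => rw [← Finset.univ_sum_single u]
    rw [map_sum]
  have key : ∀ (g : (Fin k → S) →ₗ[A] (Fin k → S)) (t : Fin k → S), Ff (g t) = g (Ff t) := by
    intro g t
    funext i
    show f ((g t) i) = (g (Ff t)) i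
    rw [expand g t, Finset.sum_apply]
    have hsum : f (∑ j, (g (Pi.single j (t j))) i) = ∑ j, f ((g (Pi.single j (t j))) i) :=
      map_sum (AddMonoidHom.mk' f hadd) _ _
    rw [hsum]
    have e2 : ∀ j, f ((g (Pi.single j (t j))) i)
        = (g (Pi.single j (f (t j)))) i := by
      intro j
      have := hcomm ((LinearMap.proj i).comp
        (g.comp (LinearMap.single A (fun _ : Fin k => S) j))) (t j)
      simpa using this
    rw [Finset.sum_congr rfl (fun j _ => e2 j), ← Finset.sum_apply, ← expand g (Ff t)]
  have hmN : m ∈ N := Submodule.mem_span_singleton_self m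
  have hπm : π m = m := by
    have h1 := Submodule.linearProjOfIsCompl_apply_left hN' ⟨m, hmN⟩
    show (N.subtype ∘ₗ (N.linearProjOfIsCompl N' hN')) m = m
    rw [LinearMap.comp_apply]
    erw [h1]
    rfl
  have hFm : Ff m ∈ N := by
    have h2 : Ff m = π (Ff m) := by
      conv_lhs => rw [← hπm, key π m]
    rw [h2]
    exact (N.linearProjOfIsCompl N' hN' (Ff m)).2
  obtain ⟨a, ha⟩ := Submodule.mem_span_singleton.1 hFm
  exact ⟨a, fun i => by
    have h3 : f (m i) = Ff m i := rfl
    rw [h3, ← ha]; rfl⟩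

end Density

private lemma stmt10_finite_split (F A : Type*) [Field F] [Finite F] [Ring A] [Algebra F A]
    [FiniteDimensional F A] [Algebra.IsCentral F A] [IsSimpleRing A] :
    ∃ a : ℕ, 0 < a ∧ Nonempty (A ≃ₐ[F] Matrix (Fin a) (Fin a) F) := by
  classical
  haveI : IsArtinian A A := isArtinian_of_tower F inferInstance
  haveI : IsAtomic (Submodule A A) :=
    isAtomic_of_orderBot_wellFounded_lt (wellFounded_lt)
  haveI : Nontrivial (Submodule A A) := nontrivial_of_ne ⊥ ⊤ bot_ne_top
  obtain ⟨S₀, hS₀⟩ := IsAtomic.exists_atom (Submodule A A)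
  haveI hsimple : IsSimpleModule A ↥S₀ := isSimpleModule_iff_isAtom.2 hS₀
  haveI : Nontrivial ↥S₀ := IsSimpleModule.nontrivial A ↥S₀
  haveI : FiniteDimensional F ↥S₀ :=
    FiniteDimensional.of_injective (S₀.subtype.restrictScalars F) S₀.injective_subtype
  haveI : Finite A := Module.finite_of_finite F
  haveI : Finite ↥S₀ := Subtype.finite
  letI : DecidableEq (Module.End A ↥S₀) := Classical.decEq _
  haveI : Finite (Module.End A ↥S₀) :=
    Finite.of_injective (fun d => (d : ↥S₀ → ↥S₀)) DFunLike.coe_injective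
  have Dcomm : ∀ d d' : Module.End A ↥S₀, d * d' = d' * d := fun d d' =>
    (littleWedderburn (Module.End A ↥S₀)).mul_comm d d'
  -- density for all vectors
  obtain ⟨k, msp, hmsp⟩ := Module.Finite.exists_fin (R := F) (M := ↥S₀)
  have dens : ∀ f : ↥S₀ → ↥S₀, (∀ x y, f (x + y) = f x + f y) →
      (∀ (d : Module.End A ↥S₀) (s : ↥S₀), f (d s) = d (f s)) →
      ∃ a : A, ∀ s : ↥S₀, f s = a • s := by
    intro f hadd hcomm
    obtain ⟨a, ha⟩ := stmt10_density f hadd hcomm msp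
    refine ⟨a, fun s => ?_⟩
    have hf0 : f 0 = 0 := by
      have := hadd 0 0
      simpa using this.symm
    have hs : s ∈ Submodule.span F (Set.range msp) := hmsp ▸ Submodule.mem_top
    induction hs using Submodule.span_induction with
    | mem x hx => obtain ⟨i, rfl⟩ := hx; exact ha i
    | zero => simp [hf0]
    | add x y _ _ hx hy => rw [hadd, hx, hy, smul_add]
    | smul c x _ hx =>
        have hfs : f (c • x) = c • f x := by
          have h4 := hcomm (c • (LinearMap.id : Module.End A ↥S₀)) x
          simpa using h4
        rw [hfs, hx, smul_comm]
  -- the representation σ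
  haveI : SMulCommClass A F ↥S₀ := ⟨fun a c s => by
    apply Subtype.ext
    show a • (c • (s : A)) = c • (a • (s : A))
    rw [smul_comm]⟩
  set σ : A →ₐ[F] Module.End F ↥S₀ := Algebra.lsmul F F ↥S₀ with hσ
  haveI : Nontrivial (Module.End F ↥S₀) := by
    obtain ⟨s, hs⟩ := exists_ne (0 : ↥S₀)
    exact ⟨1, 0, fun hh => hs (by
      have := congrArg (fun g : Module.End F ↥S₀ => g s) hh
      simpa using this)⟩
  have hinj : Function.Injective σ := RingHom.injective (σ : A →+* Module.End F ↥S₀)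
  -- every A-endomorphism of S₀ is an F-scalar
  have scalar : ∀ d : Module.End A ↥S₀, ∃ c : F, ∀ s : ↥S₀, d s = c • s := by
    intro d
    obtain ⟨a, ha⟩ := dens (fun s => d s) (fun x y => map_add d x y)
      (fun d' s => by
        show d (d' s) = d' (d s)
        rw [← Module.End.mul_apply, ← Module.End.mul_apply, Dcomm])
    have hcen : a ∈ Subalgebra.center F A := by
      rw [Subalgebra.mem_center_iff]
      intro b
      apply hinj
      apply LinearMap.ext
      intro s
      show (b * a) • s = (a * b) • s
      rw [mul_smul, mul_smul, ← ha (b • s), ← ha s, map_smul]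
    have hbot : a ∈ (⊥ : Subalgebra F A) := Algebra.IsCentral.out hcen
    obtain ⟨c, hc⟩ := Algebra.mem_bot.1 hbot
    exact ⟨c, fun s => by rw [ha s, ← hc, algebraMap_smul]⟩
  have hsurj : Function.Surjective σ := by
    intro f
    obtain ⟨a, ha⟩ := dens (fun s => f s) (fun x y => map_add f x y)
      (fun d s => by
        show f (d s) = d (f s)
        obtain ⟨c, hc⟩ := scalar d
        rw [hc s, hc (f s), map_smul])
    refine ⟨a, ?_⟩
    apply LinearMap.ext
    intro s
    show a • s = f s
    rw [ha s]
  refine ⟨Module.finrank F ↥S₀, Module.finrank_pos, ⟨?_⟩⟩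
  exact (AlgEquiv.ofBijective σ ⟨hinj, hsurj⟩).trans
    (algEquivMatrix (Module.finBasis F ↥S₀))

section Descend

variable (F : Type*) [Field F] [Infinite F] (n : ℕ)

private lemma stmt10_descend {P B : Type*} (s : ℕ) (hs : 0 < s)
    [Ring P] [Algebra F P] [IsSimpleRing P] [FiniteDimensional F P]
    [Ring B] [Algebra F B] [FiniteDimensional F B] [Nontrivial B]
    (hdim : Module.finrank F P = s * s * Module.finrank F B)
    (θ : P →ₐ[F] Matrix (Fin s) (Fin s)
      ((FractionRing (MvPolynomial (Fin n) F)) ⊗[F] B)) :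
    Nonempty (P ≃ₐ[F] Matrix (Fin s) (Fin s) B) := by
  classical
  haveI : Nonempty (Fin s) := ⟨⟨0, hs⟩⟩
  set R := MvPolynomial (Fin n) F with hR
  set L := FractionRing R with hL
  -- bases and coordinates
  let bB := Module.finBasis F B
  let bL := Algebra.TensorProduct.basis L bB
  let bP := Module.finBasis F P
  let c : (Fin (Module.finrank F P) × Fin s × Fin s × Fin (Module.finrank F B)) → L :=
    fun q => bL.repr (θ (bP q.1) q.2.1 q.2.2.1) q.2.2.2
  obtain ⟨den, hden⟩ :=
    IsLocalization.exist_integer_multiples_of_finite (nonZeroDivisors R) c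
  set f : R := (den : R) with hfdef
  have hf0 : f ≠ 0 := mem_nonZeroDivisors_iff_ne_zero.mp den.2
  -- the localization away from f
  let O := Localization.Away f
  have htower : ∀ c : F, algebraMap F O c = algebraMap R O (algebraMap F R c) :=
    fun c => IsScalarTower.algebraMap_apply F R O c
  -- the map α : O → L
  have hle : Submonoid.powers f ≤ (nonZeroDivisors R).comap (RingHom.id R) := by
    rw [Submonoid.powers_le]
    exact den.2
  let α₀ : O →+* L :=
    IsLocalization.map (M := Submonoid.powers f) (T := nonZeroDivisors R) L
      (RingHom.id R) hle
  let α : O →ₐ[F] L :=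
    { α₀ with
      commutes' := fun c => by
        have h1 : algebraMap F O c = algebraMap R O (algebraMap F R c) := htower c
        show α₀ (algebraMap F O c) = algebraMap F L c
        rw [h1, IsLocalization.map_eq hle, RingHom.id_apply,
          ← IsScalarTower.algebraMap_apply F R L c] }
  have hα : Function.Injective α := by
    have hz : ∀ z : O, α z = 0 → z = 0 := by
      intro z hz0
      obtain ⟨x', y', hxy'⟩ := IsLocalization.exists_mk'_eq (M := Submonoid.powers f) z
      have h2 : α z = IsLocalization.mk' L x' (⟨y', hle y'.2⟩ : nonZeroDivisors R) := by
        rw [← hxy']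
        exact IsLocalization.map_mk' hle x' y'
      rw [h2] at hz0
      have h3 : algebraMap R L x' = 0 := by
        have h4 := IsLocalization.mk'_spec L x' (⟨y', hle y'.2⟩ : nonZeroDivisors R)
        rw [hz0, zero_mul] at h4
        exact h4.symm
      have h5 : x' = 0 := IsFractionRing.injective R L (by rw [h3, map_zero])
      rw [← hxy', h5, IsLocalization.mk'_zero]
    intro x y hxy
    have h6 : α (x - y) = 0 := by rw [map_sub, hxy, sub_self]
    exact sub_eq_zero.mp (hz _ h6)
  -- the evaluation point
  have hex : ∃ pt : Fin n → F, MvPolynomial.eval pt f ≠ 0 := by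
    by_contra hno
    push_neg at hno
    exact hf0 (MvPolynomial.funext fun pt => by simpa using hno pt)
  obtain ⟨pt, hpt⟩ := hex
  let ε₀ : O →+* F := IsLocalization.Away.lift (g := MvPolynomial.eval pt) f
    (isUnit_iff_ne_zero.2 hpt)
  let ε : O →ₐ[F] F :=
    { ε₀ with
      commutes' := fun c => by
        have h1 : algebraMap F O c = algebraMap R O (MvPolynomial.C c) := htower c
        show ε₀ (algebraMap F O c) = algebraMap F F c
        rw [h1]
        show IsLocalization.Away.lift (g := MvPolynomial.eval pt) f _
          (algebraMap R O (MvPolynomial.C c)) = _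
        rw [IsLocalization.Away.lift_eq]
        rw [MvPolynomial.eval_C]
        simp }
  -- the injection g and its matrix version G
  let g : O ⊗[F] B →ₐ[F] L ⊗[F] B := Algebra.TensorProduct.map α (AlgHom.id F B)
  have h6 : g.toLinearMap = LinearMap.rTensor B α.toLinearMap :=
    TensorProduct.ext' fun o b => rfl
  have ginj : Function.Injective g := by
    have h5 : Function.Injective (LinearMap.rTensor B α.toLinearMap) :=
      Module.Flat.rTensor_preserves_injective_linearMap α.toLinearMap hα
    intro x y hxy
    apply h5
    rw [← h6]
    exact hxy
  let G : Matrix (Fin s) (Fin s) (O ⊗[F] B) →ₐ[F] Matrix (Fin s) (Fin s) (L ⊗[F] B) :=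
    g.mapMatrix
  have Ginj : Function.Injective G := by
    intro M N hMN
    ext i j
    apply ginj
    have h7 := congrArg (fun M' : Matrix (Fin s) (Fin s) (L ⊗[F] B) => M' i j) hMN
    simpa [G, AlgHom.mapMatrix_apply, Matrix.map_apply] using h7
  -- every θ-value has entries with coordinates in O
  have hbasis : ∀ u, θ (bP u) ∈ G.range := by
    intro u
    have hentry : ∀ i j, ∃ y : O ⊗[F] B, g y = θ (bP u) i j := by
      intro i j
      have hcoef : ∀ w, ∃ o : O, α o = bL.repr (θ (bP u) i j) w := by
        intro w
        obtain ⟨rr, hrr⟩ := hden (u, i, j, w)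
        refine ⟨IsLocalization.mk' O rr ⟨f, Submonoid.mem_powers f⟩, ?_⟩
        have h8 : α (IsLocalization.mk' O rr ⟨f, Submonoid.mem_powers f⟩)
            = IsLocalization.mk' L rr (⟨f, den.2⟩ : nonZeroDivisors R) :=
          IsLocalization.map_mk' hle rr ⟨f, Submonoid.mem_powers f⟩
        rw [h8, IsLocalization.mk'_eq_iff_eq_mul]
        show algebraMap R L rr = _ * algebraMap R L f
        rw [hrr, Algebra.smul_def, mul_comm]
      choose o ho using hcoef
      refine ⟨∑ w, o w ⊗ₜ[F] bB w, ?_⟩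
      rw [map_sum]
      have h9 : ∀ w, g (o w ⊗ₜ[F] bB w) = bL.repr (θ (bP u) i j) w • bL w := by
        intro w
        have h10 : g (o w ⊗ₜ[F] bB w) = α (o w) ⊗ₜ[F] bB w := rfl
        rw [h10, ho w, Algebra.TensorProduct.basis_apply, TensorProduct.smul_tmul',
          smul_eq_mul, mul_one]
      rw [Finset.sum_congr rfl fun w _ => h9 w]
      exact bL.sum_repr (θ (bP u) i j)
    choose Y hY using hentry
    refine ⟨Matrix.of (fun i j => Y i j), ?_⟩
    show (Matrix.of fun i j => Y i j).map g = θ (bP u)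
    ext i j
    exact hY i j
  have hrange : ∀ v : P, θ v ∈ G.range := by
    intro v
    have hv : θ v = ∑ u, bP.repr v u • θ (bP u) := by
      conv_lhs => rw [← bP.sum_repr v]
      rw [map_sum]
      exact Finset.sum_congr rfl fun u _ => map_smul θ _ _
    rw [hv]
    exact Subalgebra.sum_mem _ fun u _ =>
      Subalgebra.smul_mem _ (hbasis u) _
  -- descend θ to a map into Matrix s s B
  let q : O ⊗[F] B →ₐ[F] B :=
    (Algebra.TensorProduct.lid F B).toAlgHom.comp
      (Algebra.TensorProduct.map ε (AlgHom.id F B))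
  let ψ : P →ₐ[F] Matrix (Fin s) (Fin s) B :=
    (q.mapMatrix).comp
      ((AlgEquiv.ofInjective G Ginj).symm.toAlgHom.comp (θ.codRestrict G.range hrange))
  haveI : Nontrivial (Matrix (Fin s) (Fin s) B) :=
    inferInstanceAs (Nontrivial (Fin s → Fin s → B))
  have hψinj : Function.Injective ψ := RingHom.injective (ψ : P →+* Matrix (Fin s) (Fin s) B)
  have hψsurj : Function.Surjective ψ := by
    have h7 : Module.finrank F (Matrix (Fin s) (Fin s) B)
        = s * s * Module.finrank F B := by
      rw [Module.finrank_matrix, Fintype.card_fin]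
    have h8 : Module.finrank F (LinearMap.range ψ.toLinearMap)
        = Module.finrank F (Matrix (Fin s) (Fin s) B) := by
      rw [LinearMap.finrank_range_of_inj hψinj, hdim, h7]
    have h9 := Submodule.eq_top_of_finrank_eq h8
    exact LinearMap.range_eq_top.mp h9
  exact ⟨AlgEquiv.ofBijective ψ ⟨hψinj, hψsurj⟩⟩

end Descend

/-- Let `F` be a field, `n : ℕ`, and `K` an intermediate field
`F ⊆ K ⊆ F(X₁, …, Xₙ)` of the field of rational functions in `n` variables over `F`.
Then the base-change map `Br(F) → Br(K)` of Brauer groups is injective; elementwise: if two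
finite-dimensional central simple `F`-algebras `A`, `B` become Brauer-equivalent over `K`
(i.e. `M_r(K ⊗_F A) ≅ M_s(K ⊗_F B)` for some `r, s > 0`), then they are Brauer-equivalent
over `F` (i.e. `M_{r'}(A) ≅ M_{s'}(B)` for some `r', s' > 0`). -/
theorem stmt10 (F : Type*) [Field F] (n : ℕ)
    (K : IntermediateField F (FractionRing (MvPolynomial (Fin n) F)))
    (A B : Type*) [Ring A] [Algebra F A] [FiniteDimensional F A]
    [Algebra.IsCentral F A] [IsSimpleRing A]
    [Ring B] [Algebra F B] [FiniteDimensional F B]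
    [Algebra.IsCentral F B] [IsSimpleRing B]
    (h : ∃ (r s : ℕ), 0 < r ∧ 0 < s ∧
      Nonempty (Matrix (Fin r) (Fin r) (↥K ⊗[F] A) ≃ₐ[↥K]
        Matrix (Fin s) (Fin s) (↥K ⊗[F] B))) :
    ∃ (r' s' : ℕ), 0 < r' ∧ 0 < s' ∧
      Nonempty (Matrix (Fin r') (Fin r') A ≃ₐ[F] Matrix (Fin s') (Fin s') B) := by
  classical
  obtain ⟨r, s, hr, hs, ⟨e⟩⟩ := h
  rcases finite_or_infinite F with hF | hF
  · obtain ⟨a, ha, ⟨eA⟩⟩ := stmt10_finite_split F A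
    obtain ⟨b, hb, ⟨eB⟩⟩ := stmt10_finite_split F B
    refine ⟨b, a, hb, ha, ⟨?_⟩⟩
    exact ((((eA.mapMatrix (m := Fin b)).trans
      (Matrix.compAlgEquiv (Fin b) (Fin a) F F)).trans
      (Matrix.reindexAlgEquiv F F (Equiv.prodComm (Fin b) (Fin a)))).trans
      (Matrix.compAlgEquiv (Fin a) (Fin b) F F).symm).trans
      (eB.symm.mapMatrix (m := Fin a))
  · haveI : Nonempty (Fin r) := ⟨⟨0, hr⟩⟩
    haveI : Nonempty (Fin s) := ⟨⟨0, hs⟩⟩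
    set L := FractionRing (MvPolynomial (Fin n) F)
    -- the algebra map θ : Matrix r A → Matrix s (L ⊗ B)
    set step1 : Matrix (Fin r) (Fin r) A →ₐ[F] Matrix (Fin r) (Fin r) (↥K ⊗[F] A) :=
      (Algebra.TensorProduct.includeRight : A →ₐ[F] ↥K ⊗[F] A).mapMatrix with hstep1
    set step2 : Matrix (Fin r) (Fin r) (↥K ⊗[F] A) →ₐ[F] Matrix (Fin s) (Fin s) (↥K ⊗[F] B) :=
      (e.toAlgHom.restrictScalars F) with hstep2
    set step3 : Matrix (Fin s) (Fin s) (↥K ⊗[F] B) →ₐ[F] Matrix (Fin s) (Fin s) (L ⊗[F] B) :=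
      (Algebra.TensorProduct.map K.val (AlgHom.id F B)).mapMatrix with hstep3
    have hdim : Module.finrank F (Matrix (Fin r) (Fin r) A)
        = s * s * Module.finrank F B := by
      have h1 : Module.finrank ↥K (Matrix (Fin r) (Fin r) (↥K ⊗[F] A))
          = Module.finrank ↥K (Matrix (Fin s) (Fin s) (↥K ⊗[F] B)) :=
        e.toLinearEquiv.finrank_eq
      rw [Module.finrank_matrix, Module.finrank_matrix, Module.finrank_baseChange,
        Module.finrank_baseChange, Fintype.card_fin, Fintype.card_fin] at h1
      rw [Module.finrank_matrix, Fintype.card_fin, h1]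
    obtain ⟨ψ⟩ := stmt10_descend F n s hs hdim (step3.comp (step2.comp step1))
    exact ⟨r, s, hr, hs, ⟨ψ⟩⟩
end
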